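/- arXiv:1805.06925 — 2 statements merged into one kernel-verified Lean document; each statement's English description precedes it below -/
import Mathlib

section
/- Let μ ∈ ℝ and let u : ℝ × (0,∞) → ℝ be twice continuously differentiable and satisfy u_xx(x,t) = u_tt(x,t) + ((2−μ)/t)·u_t(x,t) for all x ∈ ℝ, t > 0. Then the function v(x,t) := t^{1−μ}·u(x,t) satisfies v_xx(x,t) = v_tt(x,t) + (μ/t)·v_t(x,t) for all x ∈ ℝ, t > 0. Equivalently: if u(x,t;μ) is a solution of u_xx = (B_μ)_t u, then t^{1−μ}·u(x,t;2−μ) is also a solution of u_xx = (B_μ)_t u. -/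
/-!
Conjugating the Bessel operator by the power `t ^ (1 - μ)` reflects its parameter:
`B_μ (t ^ (1 - μ) f) = t ^ (1 - μ) B_{2-μ} f`, by a direct computation with the product rule
in which the zeroth-order terms cancel. Since multiplication by `t ^ (1 - μ)` commutes with
`∂ₓ²`, it maps solutions of `u_xx = (B_{2-μ})_t u` to solutions of `u_xx = (B_μ)_t u`.
-/

open Real Filter Topology

noncomputable def besselOp (μ : ℝ) (f : ℝ → ℝ) (t : ℝ) : ℝ :=
  deriv (deriv f) t + μ / t * deriv f t

lemma deriv_deriv_const_mul (c : ℝ) (f : ℝ → ℝ) (x : ℝ) :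
    deriv (deriv fun y => c * f y) x = c * deriv (deriv f) x := by
  rw [deriv_const_mul_field', deriv_const_mul_field]

lemma deriv_rpow_mul_eventuallyEq {f : ℝ → ℝ} {t : ℝ} (a : ℝ) (ht : 0 < t)
    (hf : ∀ᶠ s in 𝓝 t, DifferentiableAt ℝ f s) :
    deriv (fun s => s ^ a * f s) =ᶠ[𝓝 t]
      fun s => a * s ^ (a - 1) * f s + s ^ a * deriv f s := by
  filter_upwards [hf, lt_mem_nhds ht] with s hfs hs
  exact ((hasDerivAt_rpow_const (Or.inl hs.ne')).mul hfs.hasDerivAt).deriv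

theorem besselOp_rpow_one_sub_mul {f : ℝ → ℝ} {t : ℝ} (μ : ℝ) (ht : 0 < t)
    (hf : ∀ᶠ s in 𝓝 t, DifferentiableAt ℝ f s) (hf' : DifferentiableAt ℝ (deriv f) t) :
    besselOp μ (fun s => s ^ (1 - μ) * f s) t = t ^ (1 - μ) * besselOp (2 - μ) f t := by
  have hfirst := deriv_rpow_mul_eventuallyEq (1 - μ) ht hf
  have hsecond : HasDerivAt (fun s => (1 - μ) * s ^ (1 - μ - 1) * f s + s ^ (1 - μ) * deriv f s)
      ((1 - μ) * ((1 - μ - 1) * t ^ (1 - μ - 1 - 1)) * f t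
        + (1 - μ) * t ^ (1 - μ - 1) * deriv f t
        + ((1 - μ) * t ^ (1 - μ - 1) * deriv f t + t ^ (1 - μ) * deriv (deriv f) t)) t :=
    (((hasDerivAt_rpow_const (Or.inl ht.ne')).const_mul _).mul hf.self_of_nhds.hasDerivAt).add
      ((hasDerivAt_rpow_const (Or.inl ht.ne')).mul hf'.hasDerivAt)
  unfold besselOp
  rw [hfirst.deriv_eq, hsecond.deriv, hfirst.self_of_nhds]
  have h1 : t ^ (1 - μ - 1) = t ^ (-μ) := by ring_nf
  have h2 : t ^ (1 - μ - 1 - 1) = t ^ (-μ) / t := by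
    rw [rpow_sub ht, h1, rpow_one]
  have h0 : t ^ (1 - μ) = t ^ (-μ) * t := by
    rw [← rpow_add_one ht.ne']
    ring_nf
  beta_reduce
  rw [h2, h1, h0]
  field_simp
  ring

/-- if `u` solves `u_xx = u_tt + ((2-μ)/t) u_t` (i.e. `u_xx = (B_{2-μ})_t u`),
then `v(x,t) = t^{1-μ} u(x,t)` solves `v_xx = v_tt + (μ/t) v_t` (i.e. `v_xx = (B_μ)_t v`). -/
theorem epd_parameter_reflection (μ : ℝ) (u : ℝ → ℝ → ℝ)
    (hu : ContDiffOn ℝ 2 (fun p : ℝ × ℝ => u p.1 p.2) (Set.univ ×ˢ Set.Ioi (0 : ℝ)))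
    (heq : ∀ x t : ℝ, 0 < t →
      deriv (deriv (fun x' => u x' t)) x =
        deriv (deriv (u x)) t + ((2 - μ) / t) * deriv (u x) t) :
    ∀ x t : ℝ, 0 < t →
      deriv (deriv (fun x' => t ^ (1 - μ) * u x' t)) x =
        deriv (deriv (fun t' => t' ^ (1 - μ) * u x t')) t +
          (μ / t) * deriv (fun t' => t' ^ (1 - μ) * u x t') t := by
  intro x t ht
  have hslice : ContDiffOn ℝ 2 (u x) (Set.Ioi 0) :=
    hu.comp (contDiff_const.prodMk contDiff_id).contDiffOn fun _ hs => ⟨trivial, hs⟩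
  have hdiff : ∀ᶠ s in 𝓝 t, DifferentiableAt ℝ (u x) s := by
    filter_upwards [lt_mem_nhds ht] with s hs
    exact (hslice.contDiffAt (isOpen_Ioi.mem_nhds hs)).differentiableAt (by norm_num)
  have hdiff' : DifferentiableAt ℝ (deriv (u x)) t :=
    ((hslice.deriv_of_isOpen isOpen_Ioi (m := 1) (by norm_num)).contDiffAt
      (isOpen_Ioi.mem_nhds ht)).differentiableAt one_ne_zero
  rw [deriv_deriv_const_mul, heq x t ht]
  exact (besselOp_rpow_one_sub_mul μ ht hdiff hdiff').symm
end

section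
/- Let μ > 0 and let u : ℝ × [0,∞) → ℝ be continuously differentiable with u(x,0) = f(x) and u_t(x,0) = 0 for all x. Then applying the Poisson operator in the t-variable preserves these initial data: for every x, lim_{t→0+} (𝒫^μ_t u)(x,t) = f(x) and lim_{t→0+} ∂/∂t (𝒫^μ_t u)(x,t) = 0, where (𝒫^μ_t u)(x,t) = C(μ)·t^{1−μ}·∫₀^t u(x,y)·(t²−y²)^{μ/2−1} dy. -/
/-!
The substitution `y = t s` writes `(𝒫^μ_t u)(x,t) = C(μ) ∫₀¹ u(x,ts) (1-s²)^{μ/2-1} ds` for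
`t > 0`. The kernel `(1-s²)^{μ/2-1}` is integrable on `[0,1]`, and the substitution `s² = y`
identifies twice its integral with the beta integral `B(1/2, μ/2)`, so `C(μ)` normalises it to
mass one. Dominated convergence then gives `𝒫^μ_t u → u(x,0) = f(x)`; differentiating under the
integral sign gives `∂_t 𝒫^μ_t u = C(μ) ∫₀¹ u_t(x,ts) s (1-s²)^{μ/2-1} ds`, which tends to
`u_t(x,0)` times a constant, i.e. to `0`.
-/

open MeasureTheory Real Filter

noncomputable def poissonC (μ : ℝ) : ℝ :=
  2 * Real.Gamma ((μ + 1) / 2) / (Real.sqrt Real.pi * Real.Gamma (μ / 2))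

noncomputable def poissonOpT (μ : ℝ) (u : ℝ → ℝ → ℝ) (x t : ℝ) : ℝ :=
  poissonC μ * t ^ (1 - μ) * ∫ y in (0 : ℝ)..t, u x y * (t ^ 2 - y ^ 2) ^ (μ / 2 - 1)

open Set Topology

section BetaKernel

variable {r : ℝ}

lemma ofReal_rpow_mul_one_sub_rpow {a b x : ℝ} (hx : x ∈ Icc 0 1) :
    ((x ^ a * (1 - x) ^ b : ℝ) : ℂ) = (x : ℂ) ^ (a : ℂ) * (1 - (x : ℂ)) ^ (b : ℂ) := by
  rw [Complex.ofReal_mul, Complex.ofReal_cpow hx.1, Complex.ofReal_cpow (by linarith [hx.2])]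
  push_cast
  rfl

lemma betaIntegral_one_half (r : ℝ) :
    Complex.betaIntegral (1 / 2) ((r + 1 : ℝ) : ℂ)
      = ((∫ x in (0 : ℝ)..1, x ^ (-(1 / 2) : ℝ) * (1 - x) ^ r : ℝ) : ℂ) := by
  rw [Complex.betaIntegral, ← intervalIntegral.integral_ofReal]
  refine intervalIntegral.integral_congr fun x hx => ?_
  rw [uIcc_of_le zero_le_one] at hx
  rw [ofReal_rpow_mul_one_sub_rpow hx]
  push_cast
  ring_nf

lemma intervalIntegrable_rpow_neg_half_mul_one_sub_rpow (hr : -1 < r) :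
    IntervalIntegrable (fun x : ℝ => x ^ (-(1 / 2) : ℝ) * (1 - x) ^ r) volume 0 1 := by
  have hc := Complex.betaIntegral_convergent (u := 1 / 2) (v := ((r + 1 : ℝ) : ℂ))
    (by norm_num) (by simp; linarith)
  rw [intervalIntegrable_iff_integrableOn_Ioc_of_le zero_le_one] at hc ⊢
  refine IntegrableOn.congr_fun hc.re (fun x hx => ?_) measurableSet_Ioc
  rw [← Complex.ofReal_re (x ^ _ * _), ofReal_rpow_mul_one_sub_rpow (Ioc_subset_Icc_self hx)]
  push_cast
  ring_nf
  rfl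

lemma integral_rpow_neg_half_mul_one_sub_rpow (hr : -1 < r) :
    ∫ x in (0 : ℝ)..1, x ^ (-(1 / 2) : ℝ) * (1 - x) ^ r
      = √π * Gamma (r + 1) / Gamma (r + 3 / 2) := by
  have h := Complex.Gamma_mul_Gamma_eq_betaIntegral (s := 1 / 2) (t := ((r + 1 : ℝ) : ℂ))
    (by norm_num) (by simp; linarith)
  rw [betaIntegral_one_half, show (1 / 2 : ℂ) = ((1 / 2 : ℝ) : ℂ) by norm_num,
    ← Complex.ofReal_add, Complex.Gamma_ofReal, Complex.Gamma_ofReal, Complex.Gamma_ofReal] at h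
  norm_cast at h
  rw [Gamma_one_half_eq, show 1 / 2 + (r + 1) = r + 3 / 2 by ring] at h
  rw [eq_div_iff (Gamma_pos_of_pos (by linarith)).ne', h]
  ring

lemma image_sq_Ioo_zero_one : (fun x : ℝ => x ^ 2) '' Ioo 0 1 = Ioo 0 1 := by
  simpa using (continuousOn_pow 2).image_Ioo_of_strictMonoOn zero_le_one
    ((pow_left_strictMonoOn₀ (M₀ := ℝ) two_ne_zero).mono Icc_subset_Ici_self)

lemma one_sub_sq_rpow_eq {x : ℝ} (hx : x ∈ Ioo 0 1) :
    (1 - x ^ 2) ^ r = 2⁻¹ * (|2 * x| * ((x ^ 2) ^ (-(1 / 2) : ℝ) * (1 - x ^ 2) ^ r)) := by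
  rw [abs_of_pos (by linarith [hx.1]), rpow_neg (sq_nonneg x), ← sqrt_eq_rpow, sqrt_sq hx.1.le]
  field_simp [hx.1.ne']

lemma injOn_sq_Ioo_zero_one : InjOn (fun x : ℝ => x ^ 2) (Ioo 0 1) :=
  (pow_left_strictMonoOn₀ two_ne_zero).injOn.mono (Ioo_subset_Ioi_self.trans Ioi_subset_Ici_self)

lemma integrableOn_Ioo_zero_one_comp_sq_iff {g : ℝ → ℝ} :
    IntegrableOn (fun x => |2 * x| * g (x ^ 2)) (Ioo 0 1) ↔ IntegrableOn g (Ioo 0 1) := by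
  have h := integrableOn_image_iff_integrableOn_abs_deriv_smul measurableSet_Ioo
    (fun x _ => (hasDerivAt_pow 2 x).hasDerivWithinAt) injOn_sq_Ioo_zero_one g
  rw [image_sq_Ioo_zero_one] at h
  simpa using h.symm

lemma setIntegral_Ioo_zero_one_comp_sq (g : ℝ → ℝ) :
    ∫ x in Ioo 0 1, |2 * x| * g (x ^ 2) = ∫ y in Ioo 0 1, g y := by
  have h := integral_image_eq_integral_abs_deriv_smul measurableSet_Ioo
    (fun x _ => (hasDerivAt_pow 2 x).hasDerivWithinAt) injOn_sq_Ioo_zero_one g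
  rw [image_sq_Ioo_zero_one] at h
  simpa using h.symm

lemma intervalIntegrable_one_sub_sq_rpow (hr : -1 < r) :
    IntervalIntegrable (fun s : ℝ => (1 - s ^ 2) ^ r) volume 0 1 := by
  have h := intervalIntegrable_rpow_neg_half_mul_one_sub_rpow hr
  rw [intervalIntegrable_iff_integrableOn_Ioo_of_le zero_le_one,
    ← integrableOn_Ioo_zero_one_comp_sq_iff] at h
  rw [intervalIntegrable_iff_integrableOn_Ioo_of_le zero_le_one]
  exact IntegrableOn.congr_fun (h.const_mul 2⁻¹) (fun x hx => (one_sub_sq_rpow_eq hx).symm)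
    measurableSet_Ioo

lemma integral_one_sub_sq_rpow (hr : -1 < r) :
    ∫ s in (0 : ℝ)..1, (1 - s ^ 2) ^ r = √π * Gamma (r + 1) / (2 * Gamma (r + 3 / 2)) := by
  rw [intervalIntegral.integral_of_le zero_le_one, integral_Ioc_eq_integral_Ioo,
    setIntegral_congr_fun measurableSet_Ioo fun x hx => one_sub_sq_rpow_eq hx, integral_const_mul,
    setIntegral_Ioo_zero_one_comp_sq (fun y => y ^ (-(1 / 2) : ℝ) * (1 - y) ^ r),
    ← integral_Ioc_eq_integral_Ioo, ← intervalIntegral.integral_of_le zero_le_one,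
    integral_rpow_neg_half_mul_one_sub_rpow hr]
  ring

end BetaKernel

noncomputable def dilationIntegral (k φ : ℝ → ℝ) (t : ℝ) : ℝ :=
  ∫ s in (0 : ℝ)..1, φ (t * s) * k s

section Dilation

variable {k φ φ' : ℝ → ℝ}

lemma dilationIntegral_zero (k φ : ℝ → ℝ) :
    dilationIntegral k φ 0 = φ 0 * ∫ s in (0 : ℝ)..1, k s := by
  simp [dilationIntegral, intervalIntegral.integral_const_mul]

lemma continuousOn_comp_mul_Icc (hφ : ContinuousOn φ (Ici 0)) {t : ℝ} (ht : 0 ≤ t) :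
    ContinuousOn (fun s => φ (t * s)) (Icc 0 1) :=
  hφ.comp (continuous_const_mul t).continuousOn fun _ hs => mul_nonneg ht hs.1

lemma exists_norm_comp_mul_le (hφ : ContinuousOn φ (Ici 0)) (T : ℝ) :
    ∃ M, ∀ t ∈ Icc 0 T, ∀ s ∈ Icc (0 : ℝ) 1, ‖φ (t * s)‖ ≤ M := by
  obtain ⟨M, hM⟩ := isCompact_Icc.exists_bound_of_continuousOn
    (hφ.mono (Icc_subset_Ici_self : Icc (0 : ℝ) T ⊆ Ici 0))
  refine ⟨M, fun t ht s hs => hM _ ⟨mul_nonneg ht.1 hs.1, ?_⟩⟩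
  nlinarith [ht.1, ht.2, hs.1, hs.2]

lemma intervalIntegrable_comp_mul_mul (hφ : ContinuousOn φ (Ici 0))
    (hk : IntervalIntegrable k volume 0 1) {t : ℝ} (ht : 0 ≤ t) :
    IntervalIntegrable (fun s => φ (t * s) * k s) volume 0 1 :=
  hk.continuousOn_mul (by rw [uIcc_of_le zero_le_one]; exact continuousOn_comp_mul_Icc hφ ht)

lemma continuousOn_dilationIntegral (hφ : ContinuousOn φ (Ici 0))
    (hk : IntervalIntegrable k volume 0 1) : ContinuousOn (dilationIntegral k φ) (Ici 0) := by
  intro t₀ ht₀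
  obtain ⟨M, hM⟩ := exists_norm_comp_mul_le hφ (t₀ + 1)
  have hnear : ∀ᶠ t in 𝓝[Ici 0] t₀, t ∈ Icc 0 (t₀ + 1) := by
    filter_upwards [self_mem_nhdsWithin, nhdsWithin_le_nhds (Iio_mem_nhds (lt_add_one t₀))]
      with t h₀ h₁ using ⟨h₀, le_of_lt h₁⟩
  refine intervalIntegral.continuousWithinAt_of_dominated_interval
    (bound := fun s => M * ‖k s‖) ?_ ?_ (hk.norm.const_mul M) ?_
  · filter_upwards [hnear] with t ht
    exact (intervalIntegrable_comp_mul_mul hφ hk ht.1).def'.aestronglyMeasurable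
  · filter_upwards [hnear] with t ht
    refine ae_of_all _ fun s hs => ?_
    rw [uIoc_of_le zero_le_one] at hs
    rw [norm_mul]
    exact mul_le_mul_of_nonneg_right (hM t ht s (Ioc_subset_Icc_self hs)) (norm_nonneg _)
  · refine ae_of_all _ fun s hs => ?_
    rw [uIoc_of_le zero_le_one] at hs
    refine ContinuousWithinAt.mul ?_ continuousWithinAt_const
    exact (hφ _ (mul_nonneg ht₀ hs.1.le)).comp (f := (· * s))
      (continuous_mul_const s).continuousWithinAt fun t ht => mul_nonneg ht hs.1.le

lemma hasDerivAt_dilationIntegral (hφ : ContinuousOn φ (Ici 0)) (hφ' : ContinuousOn φ' (Ici 0))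
    (hderiv : ∀ y, 0 < y → HasDerivAt φ (φ' y) y) (hk : IntervalIntegrable k volume 0 1)
    {t : ℝ} (ht : 0 < t) :
    HasDerivAt (dilationIntegral k φ) (dilationIntegral (fun s => s * k s) φ' t) t := by
  obtain ⟨M, hM⟩ := exists_norm_comp_mul_le hφ' (t + 1)
  have hnear : Ioo 0 (t + 1) ∈ 𝓝 t := Ioo_mem_nhds ht (lt_add_one t)
  have hk' : IntervalIntegrable (fun s => s * k s) volume 0 1 :=
    hk.continuousOn_mul continuousOn_id
  refine (intervalIntegral.hasDerivAt_integral_of_dominated_loc_of_deriv_le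
    (F' := fun t s => φ' (t * s) * (s * k s)) (bound := fun s => M * ‖k s‖) hnear ?_
    (intervalIntegrable_comp_mul_mul hφ hk ht.le)
    (intervalIntegrable_comp_mul_mul hφ' hk' ht.le).def'.aestronglyMeasurable ?_
    (hk.norm.const_mul M) ?_).2
  · filter_upwards [Ioi_mem_nhds ht] with t' ht'
    exact (intervalIntegrable_comp_mul_mul hφ hk (le_of_lt ht')).def'.aestronglyMeasurable
  · refine ae_of_all _ fun s hs t' ht' => ?_
    rw [uIoc_of_le zero_le_one] at hs
    have hφ's := hM t' ⟨ht'.1.le, ht'.2.le⟩ s (Ioc_subset_Icc_self hs)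
    have hs' : ‖s‖ ≤ 1 := by rw [norm_of_nonneg hs.1.le]; exact hs.2
    calc ‖φ' (t' * s) * (s * k s)‖ = ‖φ' (t' * s)‖ * ‖s‖ * ‖k s‖ := by
          rw [norm_mul, norm_mul, mul_assoc]
      _ ≤ M * 1 * ‖k s‖ := by
          gcongr
          exact (norm_nonneg _).trans hφ's
      _ = M * ‖k s‖ := by rw [mul_one]
  · refine ae_of_all _ fun s hs t' ht' => ?_
    rw [uIoc_of_le zero_le_one] at hs
    have := ((hderiv _ (mul_pos ht'.1 hs.1)).comp t' (hasDerivAt_mul_const s)).mul_const (k s)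
    simpa [mul_assoc] using this

lemma tendsto_dilationIntegral_nhdsGT_zero (hφ : ContinuousOn φ (Ici 0))
    (hk : IntervalIntegrable k volume 0 1) :
    Tendsto (dilationIntegral k φ) (𝓝[>] 0) (𝓝 (φ 0 * ∫ s in (0 : ℝ)..1, k s)) := by
  rw [← dilationIntegral_zero]
  exact (continuousOn_dilationIntegral hφ hk 0 self_mem_Ici).mono Ioi_subset_Ici_self

end Dilation

lemma integral_mul_sq_sub_sq_rpow (g : ℝ → ℝ) (r : ℝ) {t : ℝ} (ht : 0 < t) :
    ∫ y in (0 : ℝ)..t, g y * (t ^ 2 - y ^ 2) ^ r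
      = t ^ (2 * r + 1) * dilationIntegral (fun s => (1 - s ^ 2) ^ r) g t := by
  have hscale := intervalIntegral.smul_integral_comp_mul_left
    (fun y => g y * (t ^ 2 - y ^ 2) ^ r) t (a := 0) (b := 1)
  rw [mul_zero, mul_one] at hscale
  rw [← hscale, smul_eq_mul, dilationIntegral, ← intervalIntegral.integral_const_mul,
    ← intervalIntegral.integral_const_mul]
  refine intervalIntegral.integral_congr fun s hs => ?_
  rw [uIcc_of_le zero_le_one] at hs
  have h1 : (0 : ℝ) ≤ 1 - s ^ 2 := by nlinarith [hs.1, hs.2]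
  rw [show t ^ 2 - (t * s) ^ 2 = t ^ 2 * (1 - s ^ 2) by ring, mul_rpow (by positivity) h1,
    ← rpow_natCast, ← rpow_mul ht.le, rpow_add ht, rpow_one]
  push_cast
  ring

lemma poissonOpT_eq_poissonC_mul_dilationIntegral (μ : ℝ) (u : ℝ → ℝ → ℝ) (x : ℝ) {t : ℝ}
    (ht : 0 < t) :
    poissonOpT μ u x t
      = poissonC μ * dilationIntegral (fun s => (1 - s ^ 2) ^ (μ / 2 - 1)) (u x) t := by
  rw [poissonOpT, integral_mul_sq_sub_sq_rpow _ _ ht, ← mul_assoc, mul_assoc (poissonC μ),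
    ← rpow_add ht, show 1 - μ + (2 * (μ / 2 - 1) + 1) = 0 by ring, rpow_zero, mul_one]

lemma poissonC_mul_integral_one_sub_sq_rpow {μ : ℝ} (hμ : 0 < μ) :
    poissonC μ * ∫ s in (0 : ℝ)..1, (1 - s ^ 2) ^ (μ / 2 - 1) = 1 := by
  rw [integral_one_sub_sq_rpow (by linarith), poissonC,
    show μ / 2 - 1 + 1 = μ / 2 by ring, show μ / 2 - 1 + 3 / 2 = (μ + 1) / 2 by ring]
  have h₁ := Gamma_pos_of_pos (half_pos hμ)
  have h₂ : 0 < Gamma ((μ + 1) / 2) := Gamma_pos_of_pos (by linarith)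
  have h₃ : 0 < √π := sqrt_pos.mpr pi_pos
  field_simp

lemma hasDerivAt_poissonOpT {μ : ℝ} (hμ : 0 < μ) {u : ℝ → ℝ → ℝ} {x t : ℝ}
    (hv : ContDiffOn ℝ 1 (u x) (Ici 0)) (ht : 0 < t) :
    HasDerivAt (poissonOpT μ u x)
      (poissonC μ * dilationIntegral (fun s => s * (1 - s ^ 2) ^ (μ / 2 - 1))
        (derivWithin (u x) (Ici 0)) t) t := by
  have hpoisson : poissonOpT μ u x =ᶠ[𝓝 t]
      fun t => poissonC μ * dilationIntegral (fun s => (1 - s ^ 2) ^ (μ / 2 - 1)) (u x) t := by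
    filter_upwards [Ioi_mem_nhds ht] with t' ht'
    exact poissonOpT_eq_poissonC_mul_dilationIntegral μ u x ht'
  have hderiv (y : ℝ) (hy : 0 < y) : HasDerivAt (u x) (derivWithin (u x) (Ici 0) y) y := by
    rw [derivWithin_of_mem_nhds (Ici_mem_nhds hy)]
    exact (hv.differentiableOn one_ne_zero).hasDerivAt (Ici_mem_nhds hy)
  refine HasDerivAt.congr_of_eventuallyEq ?_ hpoisson
  refine HasDerivAt.const_mul _ (hasDerivAt_dilationIntegral hv.continuousOn
    (hv.continuousOn_derivWithin (uniqueDiffOn_Ici 0) le_rfl) hderiv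
    (intervalIntegrable_one_sub_sq_rpow ?_) ht)
  linarith

/-- the Poisson operator in `t` preserves the initial data
`u(x,0) = f(x)`, `u_t(x,0) = 0`:
`(𝒫^μ_t u)(x,t) → f(x)` and `∂_t (𝒫^μ_t u)(x,t) → 0` as `t → 0⁺`. -/
theorem poisson_preserves_initial_data (μ : ℝ) (hμ : 0 < μ) (f : ℝ → ℝ) (u : ℝ → ℝ → ℝ)
    (hu : ContDiffOn ℝ 1 (fun p : ℝ × ℝ => u p.1 p.2) (Set.univ ×ˢ Set.Ici (0 : ℝ)))
    (hu0 : ∀ x : ℝ, u x 0 = f x)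
    (hut0 : ∀ x : ℝ, derivWithin (u x) (Set.Ici (0 : ℝ)) 0 = 0) :
    ∀ x : ℝ,
      Tendsto (fun t => poissonOpT μ u x t) (nhdsWithin 0 (Set.Ioi (0 : ℝ))) (nhds (f x)) ∧
      Tendsto (fun t => deriv (poissonOpT μ u x) t) (nhdsWithin 0 (Set.Ioi (0 : ℝ)))
        (nhds 0) := by
  intro x
  have hv : ContDiffOn ℝ 1 (u x) (Ici 0) :=
    hu.comp (contDiff_const.prodMk contDiff_id).contDiffOn fun _ hy => ⟨mem_univ x, hy⟩
  have hK : IntervalIntegrable (fun s : ℝ => (1 - s ^ 2) ^ (μ / 2 - 1)) volume 0 1 :=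
    intervalIntegrable_one_sub_sq_rpow (by linarith)
  constructor
  · have h := (tendsto_dilationIntegral_nhdsGT_zero hv.continuousOn hK).const_mul (poissonC μ)
    rw [hu0, mul_left_comm, poissonC_mul_integral_one_sub_sq_rpow hμ, mul_one] at h
    refine h.congr' ?_
    filter_upwards [self_mem_nhdsWithin] with t ht
    exact (poissonOpT_eq_poissonC_mul_dilationIntegral μ u x ht).symm
  · have h := (tendsto_dilationIntegral_nhdsGT_zero
      (hv.continuousOn_derivWithin (uniqueDiffOn_Ici 0) le_rfl)
      (hK.continuousOn_mul continuousOn_id)).const_mul (poissonC μ)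
    rw [hut0, zero_mul, mul_zero] at h
    refine h.congr' ?_
    filter_upwards [self_mem_nhdsWithin] with t ht
    exact (hasDerivAt_poissonOpT hμ hv ht).deriv.symm
end
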